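/- arXiv:1804.08288 — 4 statements merged into one kernel-verified Lean document; each statement's English description precedes it below -/
import Mathlib

section
/- Let m_0 < m_1 < ⋯ < m_N be distinct natural numbers and N ≥ 0. Then the (N+1)×(N+1) matrix M with entries M_{i,h} = C(m_i - h + N, N) for 0 ≤ i,h ≤ N (where C(m_i - h + N, N) = 0 if h > m_i + N, interpreting m_i - h + N as an integer) is invertible over ℚ. -/
open Matrix Polynomial Finset

theorem stmt5 (N : ℕ) (m : Fin (N + 1) → ℕ) (hm : StrictMono m) :
    IsUnit (Matrix.of fun i h : Fin (N + 1) =>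
      (((m i + N - (h : ℕ)).choose N : ℚ))) := by
  set A : Matrix (Fin (N+1)) (Fin (N+1)) ℚ :=
    of fun i j => (descPochhammer ℚ (j : ℕ)).eval ((m i : ℚ)) with hA
  set D : Matrix (Fin (N+1)) (Fin (N+1)) ℚ :=
    diagonal fun j : Fin (N+1) => (((j : ℕ).factorial : ℚ))⁻¹ with hD
  set B : Matrix (Fin (N+1)) (Fin (N+1)) ℚ :=
    of fun j h : Fin (N+1) => (((N - (h : ℕ)).choose (N - (j : ℕ)) : ℚ)) with hB
  have key : (Matrix.of fun i h : Fin (N + 1) =>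
      (((m i + N - (h : ℕ)).choose N : ℚ))) = A * (D * B) := by
    ext i h
    rw [Matrix.mul_apply]
    have hrhs : ∀ j : Fin (N+1), A i j * (D * B) j h =
        ((m i).choose (j : ℕ) : ℚ) * ((N - (h : ℕ)).choose (N - (j : ℕ)) : ℚ) := by
      intro j
      rw [hD, Matrix.diagonal_mul, hA, hB]
      simp only [of_apply]
      rw [descPochhammer_eval_eq_descFactorial,
        Nat.descFactorial_eq_factorial_mul_choose]
      push_cast
      field_simp
    rw [Finset.sum_congr rfl fun j _ => hrhs j]
    have hhle : (h : ℕ) ≤ N := Fin.is_le h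
    rw [of_apply]
    rw [show m i + N - (h : ℕ) = m i + (N - (h : ℕ)) by omega]
    rw [Nat.add_choose_eq, Finset.Nat.sum_antidiagonal_eq_sum_range_succ_mk]
    rw [Fin.sum_univ_eq_sum_range
      (fun j => ((m i).choose j : ℚ) * ((N - (h : ℕ)).choose (N - j) : ℚ))]
    push_cast
    rfl
  rw [key]
  have hAunit : IsUnit A := by
    rw [Matrix.isUnit_iff_isUnit_det, isUnit_iff_ne_zero]
    rw [hA, ← Matrix.det_eval_matrixOfPolynomials_eq_det_vandermonde
      (fun i => (m i : ℚ)) (fun j => descPochhammer ℚ (j : ℕ))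
      (fun j => descPochhammer_natDegree ℚ (j : ℕ))
      (fun j => monic_descPochhammer ℚ (j : ℕ))]
    rw [Matrix.det_vandermonde_ne_zero_iff]
    exact fun a b hab => hm.injective (Nat.cast_injective hab)
  have hDunit : IsUnit D := by
    rw [Matrix.isUnit_iff_isUnit_det, isUnit_iff_ne_zero, hD, Matrix.det_diagonal]
    apply Finset.prod_ne_zero_iff.2
    intro j _
    positivity
  have hBunit : IsUnit B := by
    rw [Matrix.isUnit_iff_isUnit_det, isUnit_iff_ne_zero]
    rw [Matrix.det_of_lowerTriangular B (by
      intro a b hab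
      rw [hB, of_apply]
      have ha : (a : ℕ) ≤ N := Fin.is_le a
      have hb : (b : ℕ) ≤ N := Fin.is_le b
      have : (a : ℕ) < (b : ℕ) := hab
      norm_cast
      exact Nat.choose_eq_zero_of_lt (by omega))]
    have : ∀ j : Fin (N+1), B j j = 1 := by
      intro j
      rw [hB, of_apply, Nat.choose_self]
      norm_num
    rw [Finset.prod_congr rfl fun j _ => this j]
    simp
  exact hAunit.mul (hDunit.mul hBunit)
end

section
/- Let q, N be positive integers and let (a_k), (a'_k) be two sequences of complex numbers whose generating functions ∑ a_k z^k and ∑ a'_k z^k both equal a polynomial of degree < q(N+1) divided by (1-z^q)^{N+1} (as formal power series). Suppose A ⊆ ℕ satisfies |A ∩ (j + qℤ)| ≥ N+1 for every 0 ≤ j ≤ q-1, and a_k = a'_k for all k ∈ A. Then a_k = a'_k for all k ∈ ℕ. -/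
/-!
Put `b = a - a'`. Then `(∑ b_k z^k) (1 - z^q)^(N+1)` is a polynomial of degree `< q(N+1)`, so for
every residue `j` the multisection `c_m = b_(j+qm)` satisfies `(∑ c_m z^m) (1 - z)^(N+1) = d(z)`
with `deg d ≤ N`. Multiplying by `(1 - z)^-(N+1) = ∑ C(N+i, N) z^i` shows that `m ↦ c_m` is a
polynomial in `m` of degree `≤ N`; it vanishes at the `N + 1` indices of `A` in the class of `j`,
hence identically.
-/

open scoped Polynomial Nat

theorem Polynomial.eq_zero_of_natDegree_lt_encard {R : Type*} [CommRing R] [IsDomain R]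
    (P : R[X]) {S : Set R} (hS : (P.natDegree : ℕ∞) < S.encard) (hP : ∀ x ∈ S, P.eval x = 0) :
    P = 0 := by
  classical
  by_contra h
  have hsub : S ⊆ P.roots.toFinset := fun x hx => by simp [h, hP x hx]
  refine (Set.encard_le_encard hsub).not_gt (hS.trans_le' ?_)
  rw [Set.encard_coe_eq_coe_finsetCard, Nat.cast_le]
  exact (Multiset.toFinset_card_le _).trans (Polynomial.card_roots' P)

theorem Set.encard_setOf_add_mul_mem {q j : ℕ} (hj : j < q) (A : Set ℕ) :
    {m | j + q * m ∈ A}.encard = {k | k ∈ A ∧ k % q = j}.encard := by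
  have hinj : Function.Injective fun m => j + q * m := fun m m' h =>
    Nat.eq_of_mul_eq_mul_left (by omega) (Nat.add_left_cancel h)
  rw [← hinj.encard_image]
  congr 1
  ext k
  constructor
  · rintro ⟨m, hm, rfl⟩
    exact ⟨hm, by simp [Nat.add_mul_mod_self_left, Nat.mod_eq_of_lt hj]⟩
  · rintro ⟨hk, rfl⟩
    exact ⟨k / q, by rwa [Set.mem_ofPred_eq, Nat.mod_add_div], Nat.mod_add_div k q⟩

namespace PowerSeries

variable {R : Type*} [CommRing R]

noncomputable def multisection (q j : ℕ) : R⟦X⟧ →ₗ[R] R⟦X⟧ where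
  toFun f := mk fun m => coeff (j + q * m) f
  map_add' f g := by ext; simp
  map_smul' r f := by ext; simp

@[simp]
theorem coeff_multisection (q j m : ℕ) (f : R⟦X⟧) :
    coeff m (multisection q j f) = coeff (j + q * m) f :=
  coeff_mk m fun m => coeff (j + q * m) f

@[simp]
theorem multisection_mk (q j : ℕ) (c : ℕ → R) :
    multisection q j (mk c) = mk fun m => c (j + q * m) := by
  ext
  simp

section

variable {q j : ℕ}

theorem multisection_mul_X_pow (hj : j < q) (f : R⟦X⟧) :
    multisection q j (f * X ^ q) = multisection q j f * X := by
  ext m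
  rcases m with _ | m
  · simp [coeff_mul_X_pow', hj]
  · rw [coeff_succ_mul_X, coeff_multisection, coeff_multisection, coeff_mul_X_pow',
      if_pos (by nlinarith)]
    congr 1
    rw [Nat.mul_succ, ← Nat.add_assoc, Nat.add_sub_cancel]

theorem multisection_mul_one_sub_X_pow_pow (hj : j < q) (f : R⟦X⟧) (n : ℕ) :
    multisection q j (f * (1 - X ^ q) ^ n) = multisection q j f * (1 - X) ^ n := by
  induction n with
  | zero => simp
  | succ n ih =>
    rw [pow_succ, ← mul_assoc, mul_one_sub, map_sub, multisection_mul_X_pow hj, ih, pow_succ,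
      ← mul_assoc, mul_one_sub]

theorem coeff_multisection_mul_one_sub_X_pow_eq_zero (hj : j < q) {f : R⟦X⟧} {n : ℕ}
    {r : R[X]} (hf : f * (1 - X ^ q) ^ (n + 1) = (r : R⟦X⟧)) (hr : r.degree < (q * (n + 1) : ℕ))
    {l : ℕ} (hl : n < l) : coeff l (multisection q j f * (1 - X) ^ (n + 1)) = 0 := by
  rw [← multisection_mul_one_sub_X_pow_pow hj, hf, coeff_multisection, Polynomial.coeff_coe]
  refine Polynomial.coeff_eq_zero_of_degree_lt (hr.trans_le ?_)
  exact_mod_cast (by nlinarith : q * (n + 1) ≤ j + q * l)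

end

-- `(m + n - l).choose n` vanishes for `m < l ≤ n`, so the sum need not depend on `m`.
theorem coeff_mul_mk_add_choose_of_coeff_eq_zero {n : ℕ} {d : R⟦X⟧}
    (hd : ∀ l, n < l → coeff l d = 0) (m : ℕ) :
    coeff m (d * mk fun i => ((n + i).choose n : R)) =
      ∑ l ∈ Finset.range (n + 1), coeff l d * (m + n - l).choose n := by
  rw [coeff_mul, Finset.Nat.sum_antidiagonal_eq_sum_range_succ_mk]
  simp only [coeff_mk]
  calc ∑ l ∈ Finset.range (m + 1), coeff l d * ((n + (m - l)).choose n : R)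
      = ∑ l ∈ Finset.range (m + n + 1), coeff l d * ((m + n - l).choose n : R) := by
        refine Finset.sum_subset_zero_on_sdiff (Finset.range_subset_range.mpr (by omega)) ?_ ?_
        · intro l hl
          simp only [Finset.mem_sdiff, Finset.mem_range] at hl
          rw [Nat.choose_eq_zero_of_lt (by omega), Nat.cast_zero, mul_zero]
        · intro l hl
          rw [Finset.mem_range] at hl
          congr 3
          omega
    _ = ∑ l ∈ Finset.range (n + 1), coeff l d * (m + n - l).choose n := by
        refine (Finset.sum_subset_zero_on_sdiff (Finset.range_subset_range.mpr (by omega)) ?_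
          fun _ _ => rfl).symm
        intro l hl
        simp only [Finset.mem_sdiff, Finset.mem_range] at hl
        rw [hd l (by omega), zero_mul]

section Field

variable {K : Type*} [Field K] [CharZero K]

theorem exists_natDegree_le_eval_eq_of_mul_one_sub_X_pow {n : ℕ} {c : ℕ → K}
    (hc : ∀ l, n < l → coeff l (mk c * (1 - X) ^ (n + 1)) = 0) :
    ∃ P : K[X], P.natDegree ≤ n ∧ ∀ m : ℕ, P.eval (m : K) = c m := by
  set d := mk c * (1 - X) ^ (n + 1)
  have hcd : mk c = d * mk fun i => ((n + i).choose n : K) := by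
    rw [mul_assoc, mul_comm ((1 - X) ^ (n + 1)), mk_add_choose_mul_one_sub_pow_eq_one, mul_one]
  -- `(m + n - l).choose n = descPochhammer n (m + n - l) / n!`, also when `m < l`
  refine ⟨Polynomial.C (n ! : K)⁻¹ * ∑ l ∈ Finset.range (n + 1), Polynomial.C (coeff l d) *
    (descPochhammer K n).comp (Polynomial.X + Polynomial.C ((n : K) - l)), ?_, fun m => ?_⟩
  · refine (Polynomial.natDegree_C_mul_le _ _).trans
      (Polynomial.natDegree_sum_le_of_forall_le _ _ fun l _ => ?_)
    refine (Polynomial.natDegree_C_mul_le _ _).trans_eq ?_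
    rw [Polynomial.natDegree_comp, Polynomial.natDegree_X_add_C, mul_one, descPochhammer_natDegree]
  · have hcm : c m = coeff m (mk c) := (coeff_mk _ _).symm
    rw [hcm, hcd, coeff_mul_mk_add_choose_of_coeff_eq_zero hc, Polynomial.eval_mul,
      Polynomial.eval_C, Polynomial.eval_finsetSum, Finset.mul_sum]
    refine Finset.sum_congr rfl fun l hl => ?_
    have hln : l ≤ n := Finset.mem_range_succ_iff.mp hl
    have hcast : (m : K) + ((n : K) - l) = ((m + n - l : ℕ) : K) := by
      rw [Nat.cast_sub (by omega)]; push_cast; ring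
    simp only [Polynomial.eval_mul, Polynomial.eval_C, Polynomial.eval_comp, Polynomial.eval_add,
      Polynomial.eval_X, hcast, Nat.cast_choose_eq_descPochhammer_div]
    ring

theorem eq_zero_of_coeff_mul_one_sub_X_pow_of_le_encard {n : ℕ} {c : ℕ → K}
    (hc : ∀ l, n < l → coeff l (mk c * (1 - X) ^ (n + 1)) = 0) {S : Set ℕ}
    (hS : (n + 1 : ℕ∞) ≤ S.encard) (hcS : ∀ m ∈ S, c m = 0) (m : ℕ) : c m = 0 := by
  obtain ⟨P, hPdeg, hPc⟩ := exists_natDegree_le_eval_eq_of_mul_one_sub_X_pow hc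
  have hP : P = 0 := by
    refine P.eq_zero_of_natDegree_lt_encard (S := Nat.cast '' S) ?_ ?_
    · rw [Nat.cast_injective.encard_image]
      exact lt_of_lt_of_le (by exact_mod_cast Nat.lt_succ_of_le hPdeg) hS
    · rintro _ ⟨m, hm, rfl⟩
      rw [hPc, hcS m hm]
  rw [← hPc, hP, Polynomial.eval_zero]

end Field

end PowerSeries

theorem stmt6_general (q N : ℕ) (hq : 0 < q) (a a' : ℕ → ℂ)
    (p p' : Polynomial ℂ)
    (hdeg : p.degree < (q * (N + 1) : ℕ)) (hdeg' : p'.degree < (q * (N + 1) : ℕ))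
    (hF : PowerSeries.mk a * (1 - PowerSeries.X ^ q) ^ (N + 1) = (p : PowerSeries ℂ))
    (hF' : PowerSeries.mk a' * (1 - PowerSeries.X ^ q) ^ (N + 1) = (p' : PowerSeries ℂ))
    (A : Set ℕ)
    (hA : ∀ j < q, (N + 1 : ℕ∞) ≤ {k | k ∈ A ∧ k % q = j}.encard)
    (heq : ∀ k ∈ A, a k = a' k) :
    ∀ k : ℕ, a k = a' k := by
  have hb : PowerSeries.mk (a - a') * (1 - PowerSeries.X ^ q) ^ (N + 1) =
      ((p - p' : ℂ[X]) : PowerSeries ℂ) := by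
    rw [Polynomial.coe_sub, ← hF, ← hF', ← sub_mul]
    rfl
  have hdeg_sub : (p - p').degree < (q * (N + 1) : ℕ) :=
    (Polynomial.degree_sub_le p p').trans_lt (max_lt hdeg hdeg')
  have hclass (j : ℕ) (hj : j < q) (m : ℕ) : (a - a') (j + q * m) = 0 := by
    refine PowerSeries.eq_zero_of_coeff_mul_one_sub_X_pow_of_le_encard (fun l hl => ?_)
      (S := {m | j + q * m ∈ A}) (Set.encard_setOf_add_mul_mem hj A ▸ hA j hj)
      (fun m hm => sub_eq_zero.mpr (heq _ hm)) m
    simpa using PowerSeries.coeff_multisection_mul_one_sub_X_pow_eq_zero hj hb hdeg_sub hl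
  intro k
  simpa [Nat.mod_add_div, sub_eq_zero] using hclass (k % q) (Nat.mod_lt k hq) (k / q)

theorem stmt6 (q N : ℕ) (hq : 0 < q) (hN : 0 < N) (a a' : ℕ → ℂ)
    (p p' : Polynomial ℂ)
    (hdeg : p.degree < (q * (N + 1) : ℕ)) (hdeg' : p'.degree < (q * (N + 1) : ℕ))
    (hF : PowerSeries.mk a * (1 - PowerSeries.X ^ q) ^ (N + 1) = (p : PowerSeries ℂ))
    (hF' : PowerSeries.mk a' * (1 - PowerSeries.X ^ q) ^ (N + 1) = (p' : PowerSeries ℂ))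
    (A : Set ℕ)
    (hA : ∀ j < q, (N + 1 : ℕ∞) ≤ {k | k ∈ A ∧ k % q = j}.encard)
    (heq : ∀ k ∈ A, a k = a' k) :
    ∀ k : ℕ, a k = a' k :=
  stmt6_general q N hq a a' p p' hdeg hdeg' hF hF' A hA heq
end

section
/- Let q, N be positive integers and let (a_k), (a'_k) be sequences of complex numbers whose generating functions are of the form (polynomial of degree < q(N+1))/(1-z^q)^{N+1}. If limsup_{t→∞} |{0 ≤ k ≤ t : a_k ≠ a'_k}|/t < 1/q, then a_k = a'_k for all k. -/
/-!
Put `b = a - a'`. Multiplying by `(1 - X^q)^(N+1)` takes the `n`-th coefficient of a series, for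
`n ≥ q(N+1)`, to the `(N+1)`-th forward difference with step `q` of its coefficient sequence at
`n - q(N+1)`; as the product for `b` is a polynomial of degree `< q(N+1)`, that difference of `b`
vanishes identically. By the Gregory–Newton formula `b` is then a polynomial in `m` along each
residue class `r + qm`. If `b k ≠ 0`, the polynomial of the class of `k` is nonzero, so it has
finitely many roots: `a ≠ a'` at all but finitely many indices of that class, a set of upper
density `1/q`.
-/

open Finset Filter Polynomial fwdDiff

theorem PowerSeries.coeff_mk_mul_one_sub_X_pow_pow {R : Type*} [CommRing R] (f : ℕ → R)
    (q k n : ℕ) :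
    coeff (n + q * k) (mk f * (1 - X ^ q) ^ k) = Δ_[q] ^[k] f n := by
  induction k generalizing n with
  | zero => simp
  | succ k ih =>
    rw [show n + q * (k + 1) = n + q + q * k by ring, pow_succ, ← mul_assoc, mul_sub, mul_one,
      map_sub, coeff_mul_X_pow', if_pos (by omega), show n + q + q * k - q = n + q * k by omega,
      ih, ih, Function.iterate_succ_apply', fwdDiff]

theorem PowerSeries.fwdDiff_iter_eq_zero_of_mk_mul_one_sub_X_pow_pow_eq_coe {R : Type*}
    [CommRing R] {f : ℕ → R} {q k : ℕ} {p : R[X]} (hp : p.degree < (q * k : ℕ))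
    (hf : mk f * (1 - X ^ q) ^ k = (p : PowerSeries R)) : Δ_[q] ^[k] f = 0 :=
  funext fun n => by
    rw [Pi.zero_apply, ← coeff_mk_mul_one_sub_X_pow_pow, hf, Polynomial.coeff_coe]
    exact coeff_eq_zero_of_degree_lt (hp.trans_le (by exact_mod_cast by omega))

theorem fwdDiff_iter_eq_zero_of_le {M G : Type*} [AddCommMonoid M] [AddCommGroup G]
    (h : M) {f : M → G} {n k : ℕ} (hf : Δ_[h] ^[n] f = 0) (hk : n ≤ k) : Δ_[h] ^[k] f = 0 := by
  obtain ⟨j, rfl⟩ := Nat.exists_eq_add_of_le hk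
  rw [add_comm, Function.iterate_add_apply, hf]
  exact Function.iterate_fixed (fwdDiff_const h 0) j

theorem exists_eval_eq_of_fwdDiff_iter_eq_zero {M K : Type*} [AddCommMonoid M] [Field K]
    [CharZero K] (h : M) {f : M → K} {n : ℕ} (hf : Δ_[h] ^[n] f = 0) (y : M) :
    ∃ P : K[X], ∀ m : ℕ, f (y + m • h) = P.eval (m : K) := by
  refine ⟨∑ k ∈ range n, C (Δ_[h] ^[k] f y / k.factorial) * descPochhammer K k, fun m => ?_⟩
  calc f (y + m • h) = ∑ k ∈ range (m + 1), m.choose k • Δ_[h] ^[k] f y :=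
        shift_eq_sum_fwdDiff_iter h f m y
    _ = ∑ k ∈ range (m + 1 + n), m.choose k • Δ_[h] ^[k] f y :=
        sum_subset (range_subset_range.mpr (by omega)) fun k _ hk => by
          rw [Nat.choose_eq_zero_of_lt (by simpa using hk), zero_smul]
    _ = ∑ k ∈ range n, m.choose k • Δ_[h] ^[k] f y :=
        (sum_subset (range_subset_range.mpr (by omega)) fun k _ hk => by
          rw [fwdDiff_iter_eq_zero_of_le h hf (by simpa using hk), Pi.zero_apply, smul_zero]).symm
    _ = _ := by
        simp only [eval_finsetSum, eval_mul, eval_C, descPochhammer_eval_eq_descFactorial,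
          Nat.descFactorial_eq_factorial_mul_choose, nsmul_eq_mul]
        refine sum_congr rfl fun k _ => ?_
        have : (k.factorial : K) ≠ 0 := Nat.cast_ne_zero.mpr k.factorial_ne_zero
        push_cast
        field_simp

theorem Polynomial.eventually_eval_natCast_ne_zero {K : Type*} [Field K] [CharZero K] {P : K[X]}
    (hP : P ≠ 0) : ∀ᶠ m : ℕ in atTop, P.eval (m : K) ≠ 0 := by
  rw [← Nat.cofinite_eq_atTop]
  exact ((finite_setOfPred_isRoot hP).preimage Nat.cast_injective.injOn).eventually_cofinite_notMem

theorem ncard_setOf_le_and_le_add_one (P : ℕ → Prop) (t : ℕ) :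
    {k | k ≤ t ∧ P k}.ncard ≤ t + 1 :=
  calc {k | k ≤ t ∧ P k}.ncard ≤ (Set.Iic t).ncard :=
        Set.ncard_le_ncard (fun _ hk => hk.1) (Set.finite_Iic t)
    _ = t + 1 := by rw [← coe_Iic, Set.ncard_coe_finset, Nat.card_Iic]

theorem lt_add_mul_add_ncard_setOf_le_and {P : ℕ → Prop} {q r M : ℕ} (hq : 0 < q)
    (hP : ∀ m ≥ M, P (r + q * m)) (t : ℕ) :
    t < r + q * (M + {k | k ≤ t ∧ P k}.ncard) := by
  set c := {k | k ≤ t ∧ P k}.ncard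
  by_contra! ht
  have hsub : ↑((Icc M (M + c)).image (r + q * ·)) ⊆ {k | k ≤ t ∧ P k} := by
    intro k hk
    obtain ⟨m, hm, rfl⟩ := mem_image.mp (mem_coe.mp hk)
    rw [mem_Icc] at hm
    exact ⟨by nlinarith, hP m hm.1⟩
  have hcard := Set.ncard_le_ncard hsub ((Set.finite_Iic t).subset fun _ hk => hk.1)
  rw [Set.ncard_coe_finset, card_image_of_injective _ fun _ _ h => by simpa [hq.ne'] using h,
    Nat.card_Icc] at hcard
  omega

theorem inv_le_limsup_ncard_setOf_le_and_div {P : ℕ → Prop} {q r M : ℕ} (hq : 0 < q)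
    (hP : ∀ m ≥ M, P (r + q * m)) :
    1 / (q : ℝ) ≤ limsup (fun t : ℕ => ({k | k ≤ t ∧ P k}.ncard : ℝ) / t) atTop := by
  have hq' : (0 : ℝ) < q := Nat.cast_pos.mpr hq
  have hlim : Tendsto (fun t : ℕ => 1 / (q : ℝ) - (r / q + M) / t) atTop (nhds (1 / q)) := by
    simpa using tendsto_const_nhds.sub (tendsto_const_div_atTop_nhds_zero_nat ((r : ℝ) / q + M))
  have hlow : ∀ᶠ t : ℕ in atTop,
      1 / (q : ℝ) - (r / q + M) / t ≤ ({k | k ≤ t ∧ P k}.ncard : ℝ) / t := by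
    filter_upwards [eventually_gt_atTop 0] with t ht
    have ht' : (0 : ℝ) < t := Nat.cast_pos.mpr ht
    have := lt_add_mul_add_ncard_setOf_le_and hq hP t
    rw [← Nat.cast_lt (α := ℝ)] at this
    push_cast at this
    rw [le_div_iff₀ ht']
    field_simp
    linarith
  -- without this bound `limsup` would be the junk value of `sInf ∅`
  have hbdd : IsBoundedUnder (· ≤ ·) atTop
      (fun t : ℕ => ({k | k ≤ t ∧ P k}.ncard : ℝ) / t) := by
    refine isBoundedUnder_of_eventually_le (a := 2) ?_
    filter_upwards [eventually_gt_atTop 0] with t ht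
    have ht' : (1 : ℝ) ≤ t := Nat.one_le_cast.mpr ht
    have := ncard_setOf_le_and_le_add_one P t
    rw [← Nat.cast_le (α := ℝ)] at this
    push_cast at this
    rw [div_le_iff₀ (by linarith)]
    linarith
  exact hlim.limsup_eq ▸ limsup_le_limsup hlow hlim.isCoboundedUnder_le hbdd

theorem stmt7_general (q N : ℕ) (hq : 0 < q) (a a' : ℕ → ℂ)
    (p p' : Polynomial ℂ)
    (hdeg : p.degree < (q * (N + 1) : ℕ)) (hdeg' : p'.degree < (q * (N + 1) : ℕ))
    (hF : PowerSeries.mk a * (1 - PowerSeries.X ^ q) ^ (N + 1) = (p : PowerSeries ℂ))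
    (hF' : PowerSeries.mk a' * (1 - PowerSeries.X ^ q) ^ (N + 1) = (p' : PowerSeries ℂ))
    (hdens : Filter.limsup
        (fun t : ℕ => (({k | k ≤ t ∧ a k ≠ a' k}.ncard : ℝ)) / t) Filter.atTop
      < 1 / q) :
    ∀ k : ℕ, a k = a' k := by
  have hmk : PowerSeries.mk (a - a') * (1 - PowerSeries.X ^ q) ^ (N + 1) =
      ((p - p' : ℂ[X]) : PowerSeries ℂ) := by
    rw [show PowerSeries.mk (a - a') = PowerSeries.mk a - PowerSeries.mk a' by ext; simp, sub_mul,
      hF, hF', Polynomial.coe_sub]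
  have hΔ := PowerSeries.fwdDiff_iter_eq_zero_of_mk_mul_one_sub_X_pow_pow_eq_coe
    ((degree_sub_le p p').trans_lt (max_lt hdeg hdeg')) hmk
  intro k
  by_contra hk
  obtain ⟨P, hP⟩ := exists_eval_eq_of_fwdDiff_iter_eq_zero q hΔ (k % q)
  have hP0 : P ≠ 0 := by
    rintro rfl
    have := hP (k / q)
    rw [smul_eq_mul, Nat.mod_add_div', eval_zero, Pi.sub_apply, sub_eq_zero] at this
    exact hk this
  obtain ⟨M, hM⟩ := eventually_atTop.mp (eventually_eval_natCast_ne_zero hP0)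
  have hclass : ∀ m ≥ M, a (k % q + q * m) ≠ a' (k % q + q * m) := fun m hm => by
    rw [← sub_ne_zero, ← Pi.sub_apply, mul_comm, ← smul_eq_mul, hP m]
    exact hM m hm
  exact (inv_le_limsup_ncard_setOf_le_and_div hq hclass).not_gt hdens

theorem stmt7 (q N : ℕ) (hq : 0 < q) (hN : 0 < N) (a a' : ℕ → ℂ)
    (p p' : Polynomial ℂ)
    (hdeg : p.degree < (q * (N + 1) : ℕ)) (hdeg' : p'.degree < (q * (N + 1) : ℕ))
    (hF : PowerSeries.mk a * (1 - PowerSeries.X ^ q) ^ (N + 1) = (p : PowerSeries ℂ))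
    (hF' : PowerSeries.mk a' * (1 - PowerSeries.X ^ q) ^ (N + 1) = (p' : PowerSeries ℂ))
    (hdens : Filter.limsup
        (fun t : ℕ => (({k | k ≤ t ∧ a k ≠ a' k}.ncard : ℝ)) / t) Filter.atTop
      < 1 / q) :
    ∀ k : ℕ, a k = a' k :=
  stmt7_general q N hq a a' p p' hdeg hdeg' hF hF' hdens
end

section
/- The set ℕ × ℕ of pairs of natural numbers cannot be covered by finitely many arithmetic 'strings': there do not exist finitely many pairs (ω_i, Λ_i) ∈ (ℕ×ℕ) × (ℕ×ℕ), i = 1,…,m, such that every (m_1, m_2) ∈ ℕ×ℕ with m_1, m_2 ≥ 1 equals Λ_i + k·ω_i for some i and some k ∈ ℕ. -/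
theorem stmt13 :
    ¬ ∃ (m : ℕ) (ω Λ : Fin m → ℕ × ℕ),
        ∀ p : ℕ × ℕ, 1 ≤ p.1 → 1 ≤ p.2 → ∃ (i : Fin m) (k : ℕ), p = Λ i + k • ω i := by
  rintro ⟨m, ω, Λ, h⟩
  have hp : ∀ j : Fin (m + 1), ∃ (i : Fin m) (k : ℕ),
      (((j : ℕ) + 1, m + 1 - (j : ℕ)) : ℕ × ℕ) = Λ i + k • ω i := by
    intro j
    refine h _ (by simp) ?_
    have := j.isLt
    simp only []
    omega
  choose f g hfg using hp
  obtain ⟨j, j', hne, hfe⟩ := Fintype.exists_ne_map_eq_of_card_lt f (by simp)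
  have h1 := hfg j
  have h2 := hfg j'
  rw [hfe] at h1
  set i := f j'
  have e1 : (j : ℕ) + 1 = (Λ i).1 + g j * (ω i).1 := congrArg Prod.fst h1
  have e2 : m + 1 - (j : ℕ) = (Λ i).2 + g j * (ω i).2 := congrArg Prod.snd h1
  have e3 : (j' : ℕ) + 1 = (Λ i).1 + g j' * (ω i).1 := congrArg Prod.fst h2
  have e4 : m + 1 - (j' : ℕ) = (Λ i).2 + g j' * (ω i).2 := congrArg Prod.snd h2
  have hj := j.isLt
  have hj' := j'.isLt
  have hsum : g j * ((ω i).1 + (ω i).2) = g j' * ((ω i).1 + (ω i).2) := by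
    have s1 : ((j : ℕ) + 1) + (m + 1 - (j : ℕ)) = m + 2 := by omega
    have s2 : ((j' : ℕ) + 1) + (m + 1 - (j' : ℕ)) = m + 2 := by omega
    nlinarith [e1, e2, e3, e4]
  have hjj : (j : ℕ) ≠ (j' : ℕ) := fun hc => hne (Fin.ext hc)
  rcases Nat.eq_zero_or_pos ((ω i).1 + (ω i).2) with hs | hs
  · have c0 : (ω i).1 = 0 := by omega
    rw [c0, Nat.mul_zero] at e1 e3
    omega
  · have hk : g j = g j' := Nat.eq_of_mul_eq_mul_right hs hsum
    rw [hk] at e1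
    omega
end
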